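/- arXiv:1001.0064 — 2 statements merged into one kernel-verified Lean document; each statement's English description precedes it below -/
import Mathlib

section
/- Let (B,⌊·,·⌋,‖·‖) be an SSDB space and g₀ := ½‖·‖². Then: (a) if f ∈ PC(B) is a BC-function then P_q(f) is maximally q-positive and P_q(f^@) = P_q(f); (b) a q-positive subset A of B is maximally q-positive if and only if A − N_q(g₀) = B. -/
/-!
Everything rests on one instance of Fenchel duality: if `F` is convex and `F ≥ -½‖·‖²`, some
continuous functional `ψ` has `sup_y (ψ y - F y) ≤ -½‖ψ‖²`. Take for `ψ` a subgradient at `0`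
(Hahn–Banach, dominated by the directional derivative) of the Moreau envelope
`x ↦ inf_y (F y + ½‖x - y‖²)`. In an SSDB space `ψ = ⌊·,c⌋` with `‖c‖ = ‖ψ‖` and `q ≥ -½‖·‖²`,
so applying this to `f` tilted at `w` gives a point `a` with
`f^@(a) ≤ q(a) - (q(a - w) + ½‖a - w‖²)`, the bracket being `≥ 0`. For a BC-function `f`, and
for Simons' `Φ_A` when `A` is maximally q-positive, the bracket must vanish: `a - w ∈ N_q(g₀)`.
Conversely, if `c` is q-positively related to `a ∈ A` with `a - c ∈ N_q(g₀)`, then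
`0 ≤ q(c - a) = -½‖c - a‖²` forces `c = a`.
-/

open scoped Pointwise

noncomputable section

variable {B : Type*} [NormedAddCommGroup B] [NormedSpace ℝ B]

/-- The quadratic form `q(b) = ½⌊b,b⌋` associated with a bilinear form. -/
def qForm (br : B →ₗ[ℝ] B →ₗ[ℝ] ℝ) (b : B) : ℝ := (1 / 2) * br b b

/-- The intrinsic conjugate `f^@(c) = sup_{b} (⌊b,c⌋ - f(b))`. -/
def intrinsicConj (br : B →ₗ[ℝ] B →ₗ[ℝ] ℝ) (f : B → EReal) (c : B) : EReal :=
  ⨆ b : B, ((br b c : ℝ) : EReal) - f b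

/-- A proper function from `B` into `(-∞,∞]`: never `⊥` and somewhere finite. -/
def ProperFn (f : B → EReal) : Prop := (∀ b, f b ≠ ⊥) ∧ ∃ b, f b ≠ ⊤

/-- Convexity for `(-∞,∞]`-valued functions. -/
def ConvexFn (f : B → EReal) : Prop :=
  ∀ b c : B, ∀ t : ℝ, 0 ≤ t → t ≤ 1 →
    f (t • b + (1 - t) • c) ≤ (t : EReal) * f b + ((1 - t : ℝ) : EReal) * f c

/-- `A` is q-positive: nonempty and `q(b - c) ≥ 0` for all `b, c ∈ A`. -/
def QPos (br : B →ₗ[ℝ] B →ₗ[ℝ] ℝ) (A : Set B) : Prop :=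
  A.Nonempty ∧ ∀ b ∈ A, ∀ c ∈ A, 0 ≤ qForm br (b - c)

/-- `A` is maximally q-positive. -/
def MaxQPos (br : B →ₗ[ℝ] B →ₗ[ℝ] ℝ) (A : Set B) : Prop :=
  QPos br A ∧ ∀ C : Set B, QPos br C → A ⊆ C → C = A

/-- `P_q(f) = {b : f(b) = q(b)}`. -/
def Pq (br : B →ₗ[ℝ] B →ₗ[ℝ] ℝ) (f : B → EReal) : Set B :=
  {b : B | f b = ((qForm br b : ℝ) : EReal)}

/-- `N_q(g) = {b : g(b) = -q(b)}`. -/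
def Nq (br : B →ₗ[ℝ] B →ₗ[ℝ] ℝ) (f : B → EReal) : Set B :=
  {b : B | f b = ((-(qForm br b) : ℝ) : EReal)}

/-- `f` is a BC-function: `f^@(b) ≥ f(b) ≥ q(b)` for all `b`. -/
def IsBC (br : B →ₗ[ℝ] B →ₗ[ℝ] ℝ) (f : B → EReal) : Prop :=
  ∀ b : B, ((qForm br b : ℝ) : EReal) ≤ f b ∧ f b ≤ intrinsicConj br f b

/-- `g` is a TBC-function: `g^@(-b) ≥ g(b) ≥ -q(b)` for all `b`. -/
def IsTBC (br : B →ₗ[ℝ] B →ₗ[ℝ] ℝ) (g : B → EReal) : Prop :=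
  ∀ b : B, ((-(qForm br b) : ℝ) : EReal) ≤ g b ∧ g b ≤ intrinsicConj br g (-b)

/-- The effective domain `dom f = {b : f(b) ∈ ℝ}`. -/
def domE (f : B → EReal) : Set B := {b : B | ∃ r : ℝ, f b = (r : EReal)}

/-- `(B, ⌊·,·⌋, ‖·‖)` is an SSDB space: there is a surjective linear isometry
`ι : B → B*` with `⟨b, ι(c)⟩ = ⌊b,c⌋` for all `b, c`. -/
def IsSSDB (br : B →ₗ[ℝ] B →ₗ[ℝ] ℝ) : Prop :=
  ∃ ι : B ≃ₗᵢ[ℝ] StrongDual ℝ B, ∀ b c : B, ι c b = br b c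

open Set

section ConvexAnalysis

variable {E : Type*} [NormedAddCommGroup E] [NormedSpace ℝ E] {h : E → ℝ} {D : Set E} {F : E → ℝ}

/-- For convex `h` this is the one-sided directional derivative of `h` at `0` in direction `x`. -/
def dirDerivAtZero (h : E → ℝ) (x : E) : ℝ :=
  ⨅ t : Ioi (0 : ℝ), (h ((t : ℝ) • x) - h 0) / t

lemma ConvexOn.secant_le_secant (hh : ConvexOn ℝ univ h) (x : E) {s t : ℝ}
    (hs : s ≠ 0) (ht : t ≠ 0) (hst : s ≤ t) :
    (h (s • x) - h 0) / s ≤ (h (t • x) - h 0) / t := by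
  have hline := hh.comp_linearMap (LinearMap.toSpanSingleton ℝ E x)
  simpa using hline.secant_mono (mem_univ 0) (mem_univ s) (mem_univ t) hs ht hst

lemma ConvexOn.bddBelow_secant (hh : ConvexOn ℝ univ h) (x : E) :
    BddBelow (range fun t : Ioi (0 : ℝ) => (h ((t : ℝ) • x) - h 0) / t) := by
  refine ⟨(h ((-1 : ℝ) • x) - h 0) / (-1), ?_⟩
  rintro _ ⟨⟨t, ht⟩, rfl⟩
  exact hh.secant_le_secant x (by norm_num) (ne_of_gt ht) (by linarith [mem_Ioi.1 ht])

lemma ConvexOn.dirDerivAtZero_le (hh : ConvexOn ℝ univ h) (x : E) {t : ℝ} (ht : 0 < t) :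
    dirDerivAtZero h x ≤ (h (t • x) - h 0) / t :=
  ciInf_le (hh.bddBelow_secant x) ⟨t, ht⟩

lemma dirDerivAtZero_zero : dirDerivAtZero h 0 = 0 := by
  simp [dirDerivAtZero]

lemma ConvexOn.dirDerivAtZero_smul_le (hh : ConvexOn ℝ univ h) {c : ℝ} (hc : 0 < c) (x : E) :
    dirDerivAtZero h (c • x) ≤ c * dirDerivAtZero h x := by
  rw [← div_le_iff₀' hc]
  refine le_ciInf fun ⟨t, ht⟩ => ?_
  rw [div_le_iff₀' hc]
  have hct : 0 < t / c := div_pos ht hc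
  calc dirDerivAtZero h (c • x) ≤ (h ((t / c) • c • x) - h 0) / (t / c) :=
        hh.dirDerivAtZero_le _ hct
    _ = c * ((h (t • x) - h 0) / t) := by
        rw [smul_smul, div_mul_cancel₀ _ hc.ne']
        field_simp

lemma ConvexOn.dirDerivAtZero_smul (hh : ConvexOn ℝ univ h) {c : ℝ} (hc : 0 < c) (x : E) :
    dirDerivAtZero h (c • x) = c * dirDerivAtZero h x := by
  refine le_antisymm (hh.dirDerivAtZero_smul_le hc x) ?_
  have := hh.dirDerivAtZero_smul_le (inv_pos.2 hc) (c • x)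
  rwa [inv_smul_smul₀ hc.ne', le_inv_mul_iff₀ hc] at this

lemma ConvexOn.dirDerivAtZero_add_le (hh : ConvexOn ℝ univ h) (x y : E) :
    dirDerivAtZero h (x + y) ≤ dirDerivAtZero h x + dirDerivAtZero h y := by
  have key : ∀ s t : ℝ, 0 < s → 0 < t →
      dirDerivAtZero h (x + y) ≤ (h (s • x) - h 0) / s + (h (t • y) - h 0) / t := by
    intro s t hs ht
    set u := min s t
    have hu : 0 < u := lt_min hs ht
    have hmid : h ((u / 2) • (x + y)) ≤ 1 / 2 * h (u • x) + 1 / 2 * h (u • y) :=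
      calc h ((u / 2) • (x + y)) = h ((1 / 2 : ℝ) • (u • x) + (1 / 2 : ℝ) • (u • y)) := by
            congr 1; module
        _ ≤ _ := hh.2 (mem_univ _) (mem_univ _) one_half_pos.le one_half_pos.le (add_halves 1)
    have hx := hh.secant_le_secant x hu.ne' hs.ne' (min_le_left s t)
    have hy := hh.secant_le_secant y hu.ne' ht.ne' (min_le_right s t)
    have hxy := hh.dirDerivAtZero_le (x + y) (half_pos hu)
    have hsum : (h ((u / 2) • (x + y)) - h 0) / (u / 2)
        ≤ (h (u • x) - h 0) / u + (h (u • y) - h 0) / u := by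
      rw [← add_div, div_le_div_iff₀ (half_pos hu) hu]
      nlinarith
    linarith
  rw [← sub_le_iff_le_add]
  refine le_ciInf fun ⟨s, hs⟩ => ?_
  rw [sub_le_iff_le_add, ← sub_le_iff_le_add']
  exact le_ciInf fun ⟨t, ht⟩ => by linarith [key s t hs ht]

lemma LinearMap.norm_apply_le_of_le_on_closedBall (g : E →ₗ[ℝ] ℝ) {M : ℝ}
    (hg : ∀ x, ‖x‖ ≤ 1 → g x ≤ M) (x : E) : ‖g x‖ ≤ M * ‖x‖ := by
  rcases eq_or_ne x 0 with rfl | hx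
  · simp
  have hnx : 0 < ‖x‖ := norm_pos_iff.2 hx
  set u := ‖x‖⁻¹ • x
  have hu : ‖u‖ ≤ 1 := by simp [u, norm_smul, hnx.ne']
  have hgu : |g u| ≤ M := abs_le.2
    ⟨by linarith [hg (-u) (by rwa [norm_neg]), g.map_neg u], hg u hu⟩
  have hgx : g x = ‖x‖ * g u := by
    simp [u, map_smul, smul_eq_mul, ← mul_assoc, mul_inv_cancel₀ hnx.ne']
  rw [Real.norm_eq_abs, hgx, abs_mul, abs_of_pos hnx, mul_comm]
  exact mul_le_mul_of_nonneg_right hgu hnx.le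

theorem ConvexOn.exists_subgradient_zero (hh : ConvexOn ℝ univ h) {M : ℝ}
    (hM : ∀ x, ‖x‖ ≤ 1 → h x ≤ M) : ∃ ψ : StrongDual ℝ E, ∀ x, ψ x ≤ h x - h 0 := by
  obtain ⟨g, -, hg⟩ := exists_extension_of_le_sublinear ⟨⊥, 0⟩ (dirDerivAtZero h)
    (fun c hc x => hh.dirDerivAtZero_smul hc x) hh.dirDerivAtZero_add_le
    (fun x => by simp [(Submodule.mem_bot ℝ).1 x.2, dirDerivAtZero_zero])
  have hgh : ∀ x, g x ≤ h x - h 0 := fun x =>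
    (hg x).trans (by simpa using hh.dirDerivAtZero_le x one_pos)
  refine ⟨g.mkContinuous (M - h 0) (g.norm_apply_le_of_le_on_closedBall fun x hx => ?_), hgh⟩
  linarith [hgh x, hM x hx]

lemma StrongDual.half_sq_norm_le (ψ : StrongDual ℝ E) {C : ℝ}
    (hψ : ∀ u, ψ u ≤ 1 / 2 * ‖u‖ ^ 2 + C) : 1 / 2 * ‖ψ‖ ^ 2 ≤ C := by
  have hC : 0 ≤ C := by simpa using hψ 0
  have hbound : ∀ r : ℝ, 0 < r → ‖ψ‖ ≤ r / 2 + C / r := by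
    intro r hr
    refine ψ.opNorm_le_of_unit_norm (by positivity) fun x hx => ?_
    have hpos := hψ (r • x)
    have hneg := hψ (r • -x)
    simp only [map_smul, map_neg, smul_eq_mul, norm_smul, norm_neg, hx, Real.norm_eq_abs,
      abs_of_pos hr] at hpos hneg
    rw [Real.norm_eq_abs, abs_le, ← mul_le_mul_iff_right₀ hr, ← mul_le_mul_iff_right₀ hr]
    constructor <;> field_simp <;> nlinarith
  rcases (norm_nonneg ψ).eq_or_lt with h0 | hpos
  · simp [← h0, hC]
  · have := hbound ‖ψ‖ hpos
    field_simp at this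
    nlinarith

lemma ConvexOn.iInf_snd {V : Type*} [AddCommGroup V] [Module ℝ V] {S : Set V} [Nonempty S]
    {G : E × V → ℝ} (hG : ConvexOn ℝ (Prod.snd ⁻¹' S) G)
    (hbdd : ∀ x, BddBelow (range fun y : S => G (x, y))) :
    ConvexOn ℝ univ fun x => ⨅ y : S, G (x, y) := by
  refine ⟨convex_univ, fun x₁ _ x₂ _ a b ha hb hab => le_of_forall_pos_le_add fun ε hε => ?_⟩
  obtain ⟨y₁, hy₁⟩ := exists_lt_of_ciInf_lt (lt_add_of_pos_right (⨅ y : S, G (x₁, y)) hε)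
  obtain ⟨y₂, hy₂⟩ := exists_lt_of_ciInf_lt (lt_add_of_pos_right (⨅ y : S, G (x₂, y)) hε)
  have hy : a • (x₁, (y₁ : V)) + b • (x₂, (y₂ : V)) ∈ Prod.snd ⁻¹' S :=
    hG.1 (x := (x₁, _)) (y := (x₂, _)) y₁.2 y₂.2 ha hb hab
  calc ⨅ y : S, G (a • x₁ + b • x₂, y)
      ≤ G (a • (x₁, (y₁ : V)) + b • (x₂, (y₂ : V))) := by
        simpa using ciInf_le (hbdd _) ⟨_, hy⟩
    _ ≤ a * G (x₁, y₁) + b * G (x₂, y₂) := hG.2 y₁.2 y₂.2 ha hb hab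
    _ ≤ a * ((⨅ y : S, G (x₁, y)) + ε) + b * ((⨅ y : S, G (x₂, y)) + ε) := by
        gcongr
    _ = a • (⨅ y : S, G (x₁, y)) + b • (⨅ y : S, G (x₂, y)) + ε := by
        simp only [smul_eq_mul]; linear_combination ε * hab

lemma convexOn_half_sq_norm : ConvexOn ℝ univ fun x : E => 1 / 2 * ‖x‖ ^ 2 := by
  simpa [Pi.pow_apply] using
    (convexOn_univ_norm.pow (fun x _ => norm_nonneg x) 2).smul (c := (1 / 2 : ℝ)) (by norm_num)

/-- Midpoint convexity against `F ≥ -½‖·‖²` bounds `F` below by `-¼‖· + b₀‖² - F b₀`; this keeps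
the Moreau envelope finite. -/
lemma ConvexOn.neg_le_add_half_sq_norm_sub (hF : ConvexOn ℝ D F)
    (hlow : ∀ y ∈ D, -(1 / 2 * ‖y‖ ^ 2) ≤ F y) {b₀ y : E} (hb₀ : b₀ ∈ D) (hy : y ∈ D) (x : E) :
    -(F b₀ + 1 / 2 * ‖x + b₀‖ ^ 2) ≤ F y + 1 / 2 * ‖x - y‖ ^ 2 := by
  have hmid : (1 / 2 : ℝ) • y + (1 / 2 : ℝ) • b₀ ∈ D :=
    hF.1 hy hb₀ one_half_pos.le one_half_pos.le (add_halves 1)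
  have hconv := hF.2 hy hb₀ one_half_pos.le one_half_pos.le (add_halves 1)
  have hnorm : ‖(1 / 2 : ℝ) • y + (1 / 2 : ℝ) • b₀‖ = 1 / 2 * ‖y + b₀‖ := by
    rw [← smul_add, norm_smul]; norm_num
  have htri : ‖y + b₀‖ ≤ ‖x - y‖ + ‖x + b₀‖ := by
    calc ‖y + b₀‖ = ‖-(x - y) + (x + b₀)‖ := by congr 1; abel
      _ ≤ ‖-(x - y)‖ + ‖x + b₀‖ := norm_add_le _ _
      _ = ‖x - y‖ + ‖x + b₀‖ := by rw [norm_neg]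
  have := hlow _ hmid
  rw [hnorm] at this
  simp only [smul_eq_mul] at hconv
  nlinarith [norm_nonneg (x - y), norm_nonneg (x + b₀), norm_nonneg (y + b₀),
    sq_nonneg (‖x - y‖ - ‖x + b₀‖)]

def moreauEnvelope (D : Set E) (F : E → ℝ) (x : E) : ℝ :=
  ⨅ y : D, F y + 1 / 2 * ‖x - y‖ ^ 2

lemma ConvexOn.bddBelow_moreau (hF : ConvexOn ℝ D F) (hlow : ∀ y ∈ D, -(1 / 2 * ‖y‖ ^ 2) ≤ F y)
    (hD : D.Nonempty) (x : E) : BddBelow (range fun y : D => F y + 1 / 2 * ‖x - y‖ ^ 2) := by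
  obtain ⟨b₀, hb₀⟩ := hD
  exact ⟨_, by rintro _ ⟨y, rfl⟩; exact hF.neg_le_add_half_sq_norm_sub hlow hb₀ y.2 x⟩

lemma ConvexOn.convexOn_moreauEnvelope (hF : ConvexOn ℝ D F)
    (hlow : ∀ y ∈ D, -(1 / 2 * ‖y‖ ^ 2) ≤ F y) (hD : D.Nonempty) :
    ConvexOn ℝ univ (moreauEnvelope D F) := by
  have : Nonempty D := hD.to_subtype
  have hG : ConvexOn ℝ (Prod.snd ⁻¹' D) fun p : E × E => F p.2 + 1 / 2 * ‖p.1 - p.2‖ ^ 2 :=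
    (hF.comp_linearMap (LinearMap.snd ℝ E E)).add
      ((convexOn_half_sq_norm.comp_linearMap (LinearMap.fst ℝ E E - LinearMap.snd ℝ E E)).subset
        (subset_univ _) (hF.1.linear_preimage (LinearMap.snd ℝ E E)))
  exact ConvexOn.iInf_snd hG (hF.bddBelow_moreau hlow hD)

/-- Fenchel duality for `F + ½‖·‖² ≥ 0`: the dual problem is attained. -/
theorem ConvexOn.exists_strongDual_sub_le (hF : ConvexOn ℝ D F)
    (hlow : ∀ y ∈ D, -(1 / 2 * ‖y‖ ^ 2) ≤ F y) (hD : D.Nonempty) :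
    ∃ ψ : StrongDual ℝ E, ∀ y ∈ D, ψ y - F y ≤ -(1 / 2 * ‖ψ‖ ^ 2) := by
  obtain ⟨b₀, hb₀⟩ := hD
  have hle : ∀ x, ∀ y ∈ D, moreauEnvelope D F x ≤ F y + 1 / 2 * ‖x - y‖ ^ 2 :=
    fun x y hy => ciInf_le (hF.bddBelow_moreau hlow ⟨b₀, hb₀⟩ x) ⟨y, hy⟩
  have : Nonempty D := ⟨⟨b₀, hb₀⟩⟩
  have h0 : 0 ≤ moreauEnvelope D F 0 :=
    le_ciInf fun y => by simpa [neg_le_iff_add_nonneg', add_comm] using hlow y y.2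
  have hball : ∀ x : E, ‖x‖ ≤ 1 → moreauEnvelope D F x ≤ F b₀ + 1 / 2 * (1 + ‖b₀‖) ^ 2 := by
    intro x hx
    have : ‖x - b₀‖ ≤ 1 + ‖b₀‖ := (norm_sub_le x b₀).trans (by linarith)
    linarith [hle x b₀ hb₀, pow_le_pow_left₀ (norm_nonneg _) this 2]
  obtain ⟨ψ, hψ⟩ := (hF.convexOn_moreauEnvelope hlow ⟨b₀, hb₀⟩).exists_subgradient_zero hball
  refine ⟨ψ, fun y hy => ?_⟩
  have := ψ.half_sq_norm_le (C := F y - ψ y - moreauEnvelope D F 0) fun u => by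
    have := hle (y + u) y hy
    rw [add_sub_cancel_left] at this
    linarith [hψ (y + u), map_add ψ y u]
  linarith

end ConvexAnalysis

section SSD

variable (br : B →ₗ[ℝ] B →ₗ[ℝ] ℝ)

lemma qForm_add (hsymm : ∀ b c : B, br b c = br c b) (b c : B) :
    qForm br (b + c) = qForm br b + br b c + qForm br c := by
  simp only [qForm, map_add, LinearMap.add_apply, hsymm c b]; ring

lemma qForm_sub (hsymm : ∀ b c : B, br b c = br c b) (b c : B) :
    qForm br (b - c) = qForm br b - br b c + qForm br c := by
  simp only [qForm, map_sub, LinearMap.sub_apply, hsymm c b]; ring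

lemma qForm_neg (b : B) : qForm br (-b) = qForm br b := by simp [qForm]

lemma qForm_smul (t : ℝ) (b : B) : qForm br (t • b) = t ^ 2 * qForm br b := by
  simp only [qForm, map_smul, LinearMap.smul_apply, smul_eq_mul]; ring

lemma apply_self_eq_two_mul_qForm (b : B) : br b b = 2 * qForm br b := by
  simp only [qForm]; ring

variable {br}

lemma IsSSDB.exists_apply_eq (hssdb : IsSSDB br) (ψ : StrongDual ℝ B) :
    ∃ c : B, ‖c‖ = ‖ψ‖ ∧ ∀ b, br b c = ψ b := by
  obtain ⟨ι, hι⟩ := hssdb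
  exact ⟨ι.symm ψ, ι.symm.norm_map ψ, fun b => by rw [← hι, ι.apply_symm_apply]⟩

lemma IsSSDB.neg_half_sq_norm_le_qForm (hssdb : IsSSDB br) (b : B) :
    -(1 / 2 * ‖b‖ ^ 2) ≤ qForm br b := by
  obtain ⟨ι, hι⟩ := hssdb
  have h := (ι b).le_opNorm b
  rw [hι, ι.norm_map, Real.norm_eq_abs, ← sq] at h
  simp only [qForm]
  linarith [neg_abs_le (br b b)]

open Filter Topology in
lemma ConvexOn.apply_sub_le_qForm (hsymm : ∀ b c : B, br b c = br c b) {D : Set B} {F : B → ℝ}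
    (hF : ConvexOn ℝ D F) (hq : ∀ y ∈ D, qForm br y ≤ F y) {b c : B} (hb : b ∈ D)
    (hFb : F b = qForm br b) (hc : c ∈ D) : br c b - F c ≤ qForm br b := by
  have key : ∀ t ∈ Ioo (0 : ℝ) 1, br c b - qForm br b + t * qForm br (c - b) ≤ F c := by
    rintro t ⟨ht0, ht1⟩
    have hpt : t • c + (1 - t) • b = b + t • (c - b) := by module
    have hmem := hF.1 hc hb ht0.le (by linarith) (add_sub_cancel t 1)
    have hconv := hF.2 hc hb ht0.le (by linarith) (add_sub_cancel t 1)
    have hqt := hq _ hmem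
    rw [hpt] at hconv hqt
    rw [qForm_add br hsymm, map_smul, smul_eq_mul, qForm_smul] at hqt
    simp only [smul_eq_mul, hFb] at hconv
    have hbc : br b (c - b) = br c b - 2 * qForm br b := by
      rw [map_sub, hsymm b c, apply_self_eq_two_mul_qForm]
    refine le_of_mul_le_mul_left ?_ ht0
    nlinarith
  have hlim : Tendsto (fun t => br c b - qForm br b + t * qForm br (c - b)) (𝓝[>] 0)
      (𝓝 (br c b - qForm br b)) := by
    have : Continuous fun t : ℝ => br c b - qForm br b + t * qForm br (c - b) := by fun_prop
    simpa using this.continuousWithinAt.tendsto (x := 0) (s := Ioi 0)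
  have hev : ∀ᶠ t in 𝓝[>] (0 : ℝ), br c b - qForm br b + t * qForm br (c - b) ≤ F c :=
    mem_of_superset (Ioo_mem_nhdsGT one_pos) key
  linarith [le_of_tendsto hlim hev]

end SSD

section Conjugate

variable {br : B →ₗ[ℝ] B →ₗ[ℝ] ℝ} {f : B → EReal}

lemma ConvexFn.convexOn_toReal (hf : ConvexFn f) (hbot : ∀ b, f b ≠ ⊥) :
    ConvexOn ℝ (domE f) fun b => (f b).toReal := by
  have key : ∀ b ∈ domE f, ∀ c ∈ domE f, ∀ a t : ℝ, 0 ≤ a → 0 ≤ t → a + t = 1 →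
      a • b + t • c ∈ domE f ∧
        (f (a • b + t • c)).toReal ≤ a * (f b).toReal + t * (f c).toReal := by
    rintro b ⟨r₁, h₁⟩ c ⟨r₂, h₂⟩ a t ha ht hat
    obtain rfl : t = 1 - a := by linarith
    have hle := hf b c a ha (by linarith)
    rw [h₁, h₂, ← EReal.coe_mul, ← EReal.coe_mul, ← EReal.coe_add] at hle
    have hval := EReal.coe_toReal (ne_top_of_le_ne_top (EReal.coe_ne_top _) hle) (hbot _)
    refine ⟨⟨_, hval.symm⟩, ?_⟩
    rw [← hval, EReal.coe_le_coe_iff] at hle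
    simpa [h₁, h₂] using hle
  exact ⟨fun b hb c hc a t ha ht hat => (key b hb c hc a t ha ht hat).1,
    fun b hb c hc a t ha ht hat => (key b hb c hc a t ha ht hat).2⟩

lemma intrinsicConj_le_coe (hbot : ∀ b, f b ≠ ⊥) {c : B} {r : ℝ}
    (h : ∀ b ∈ domE f, br b c - (f b).toReal ≤ r) : intrinsicConj br f c ≤ r := by
  refine iSup_le fun b => ?_
  by_cases htop : f b = ⊤
  · simp [htop]
  · have hb := EReal.coe_toReal htop (hbot b)
    rw [← hb, ← EReal.coe_sub, EReal.coe_le_coe_iff]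
    exact h b ⟨_, hb.symm⟩

lemma ne_bot_of_qForm_le (hq : ∀ b, ((qForm br b : ℝ) : EReal) ≤ f b) (b : B) : f b ≠ ⊥ :=
  ne_bot_of_le_ne_bot (EReal.coe_ne_bot _) (hq b)

lemma qForm_le_toReal (hq : ∀ b, ((qForm br b : ℝ) : EReal) ≤ f b) {b : B} (hb : b ∈ domE f) :
    qForm br b ≤ (f b).toReal := by
  obtain ⟨r, hr⟩ := hb
  simpa [hr] using hq b

lemma apply_sub_le_intrinsicConj (b c : B) :
    ((br b c : ℝ) : EReal) - f b ≤ intrinsicConj br f c :=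
  le_iSup (fun y => ((br y c : ℝ) : EReal) - f y) b

/-- Fenchel duality applied to `f` tilted at `w`: the tilted function
`y ↦ f(w + y) - ⌊y,w⌋ - q(w)` is still `≥ q ≥ -½‖·‖²`. -/
theorem exists_intrinsicConj_le (hsymm : ∀ b c : B, br b c = br c b) (hssdb : IsSSDB br)
    (hf : ConvexFn f) (hfin : ∃ b, f b ≠ ⊤) (hq : ∀ b, ((qForm br b : ℝ) : EReal) ≤ f b) (w : B) :
    ∃ a, intrinsicConj br f a ≤
      ((qForm br a - (qForm br (a - w) + 1 / 2 * ‖a - w‖ ^ 2) : ℝ) : EReal) := by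
  have hbot := ne_bot_of_qForm_le hq
  have hF := hf.convexOn_toReal hbot
  have hD' : Convex ℝ ((fun z => w + z) ⁻¹' domE f) := (hF.translate_right w).1
  have hF' := ((hF.translate_right w).sub ((br.flip w).concaveOn hD')).add_const (-qForm br w)
  obtain ⟨b₀, hb₀⟩ := hfin
  obtain ⟨ψ, hψ⟩ := hF'.exists_strongDual_sub_le (fun y hy => by
      have := qForm_le_toReal hq hy
      simp only [Pi.add_apply, Pi.sub_apply, Function.comp_apply, LinearMap.flip_apply]
      linarith [qForm_add br hsymm w y, hsymm w y, hssdb.neg_half_sq_norm_le_qForm y])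
    ⟨b₀ - w, by simpa using ⟨_, (EReal.coe_toReal hb₀ (hbot b₀)).symm⟩⟩
  obtain ⟨c, hc, hcψ⟩ := hssdb.exists_apply_eq ψ
  refine ⟨w + c, intrinsicConj_le_coe hbot fun z hz => ?_⟩
  have := hψ (z - w) (by simpa using hz)
  simp only [Pi.add_apply, Pi.sub_apply, Function.comp_apply, LinearMap.flip_apply,
    add_sub_cancel, ← hcψ, ← hc] at this
  simp only [add_sub_cancel_left, map_add, map_sub, LinearMap.sub_apply] at this ⊢
  linarith [qForm_add br hsymm w c, hsymm w c, apply_self_eq_two_mul_qForm br w]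

end Conjugate

section QPositive

variable {br : B →ₗ[ℝ] B →ₗ[ℝ] ℝ}

lemma mem_of_maxQPos {A : Set B} (hmax : MaxQPos br A) {b : B}
    (hb : ∀ a ∈ A, 0 ≤ qForm br (b - a)) : b ∈ A := by
  have hqp : QPos br (insert b A) := by
    refine ⟨⟨b, mem_insert b A⟩, ?_⟩
    rintro x (rfl | hx) y (rfl | hy)
    · simp [qForm]
    · exact hb y hy
    · rw [← neg_sub, qForm_neg]; exact hb x hx
    · exact hmax.1.2 x hx y hy
  rw [← hmax.2 _ hqp (subset_insert b A)]
  exact mem_insert b A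

lemma maxQPos_of_forall_exists {A : Set B} (hA : QPos br A)
    (h : ∀ w, ∃ a ∈ A, qForm br (a - w) = -(1 / 2 * ‖a - w‖ ^ 2)) : MaxQPos br A := by
  refine ⟨hA, fun C hC hAC => (subset_antisymm ?_ hAC)⟩
  intro c hc
  obtain ⟨a, ha, hac⟩ := h c
  have hpos := hC.2 c hc a (hAC ha)
  rw [← neg_sub, qForm_neg, hac] at hpos
  have hac : ‖a - c‖ = 0 := by nlinarith [norm_nonneg (a - c)]
  exact norm_sub_eq_zero_iff.1 hac ▸ ha

lemma sub_Nq_eq_univ_iff {g₀ : B → EReal}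
    (hg₀ : ∀ b : B, g₀ b = (((1 / 2) * ‖b‖ ^ 2 : ℝ) : EReal)) (A : Set B) :
    A - Nq br g₀ = univ ↔ ∀ w, ∃ a ∈ A, qForm br (a - w) = -(1 / 2 * ‖a - w‖ ^ 2) := by
  have hN : ∀ n, n ∈ Nq br g₀ ↔ qForm br n = -(1 / 2 * ‖n‖ ^ 2) := fun n => by
    simp only [Nq, mem_ofPred_eq, hg₀, EReal.coe_eq_coe_iff]
    constructor <;> intro h <;> linarith
  simp only [eq_univ_iff_forall, mem_sub, hN]
  refine forall_congr' fun w => ⟨?_, ?_⟩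
  · rintro ⟨a, ha, n, hn, rfl⟩
    exact ⟨a, ha, by rwa [sub_sub_cancel]⟩
  · rintro ⟨a, ha, h⟩
    exact ⟨a, ha, a - w, h, sub_sub_cancel a w⟩

end QPositive

section BCFunction

variable {br : B →ₗ[ℝ] B →ₗ[ℝ] ℝ} {f : B → EReal}

lemma intrinsicConj_le_of_mem_Pq (hsymm : ∀ b c : B, br b c = br c b) (hf : ConvexFn f)
    (hq : ∀ b, ((qForm br b : ℝ) : EReal) ≤ f b) {b : B} (hb : b ∈ Pq br f) :
    intrinsicConj br f b ≤ qForm br b := by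
  have hbot := ne_bot_of_qForm_le hq
  have hFb : (f b).toReal = qForm br b := by rw [show f b = _ from hb, EReal.toReal_coe]
  exact intrinsicConj_le_coe hbot fun c hc => (hf.convexOn_toReal hbot).apply_sub_le_qForm hsymm
    (fun y hy => qForm_le_toReal hq hy) ⟨_, hb⟩ hFb hc

lemma Pq_intrinsicConj (hsymm : ∀ b c : B, br b c = br c b) (hf : ConvexFn f)
    (hbc : IsBC br f) : Pq br (intrinsicConj br f) = Pq br f := by
  ext b
  constructor
  · intro hb
    exact le_antisymm ((hbc b).2.trans hb.le) (hbc b).1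
  · intro hb
    refine le_antisymm (intrinsicConj_le_of_mem_Pq hsymm hf (fun b => (hbc b).1) hb) ?_
    rw [← show f b = _ from hb]
    exact (hbc b).2

lemma IsBC.exists_mem_Pq (hbc : IsBC br f) (hsymm : ∀ b c : B, br b c = br c b)
    (hssdb : IsSSDB br) (hf : ConvexFn f) (hfin : ∃ b, f b ≠ ⊤) (w : B) :
    ∃ a ∈ Pq br f, qForm br (a - w) = -(1 / 2 * ‖a - w‖ ^ 2) := by
  obtain ⟨a, ha⟩ := exists_intrinsicConj_le hsymm hssdb hf hfin (fun b => (hbc b).1) w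
  have hs := hssdb.neg_half_sq_norm_le_qForm (a - w)
  have hchain := EReal.coe_le_coe_iff.1 ((hbc a).1.trans ((hbc a).2.trans ha))
  refine ⟨a, le_antisymm ?_ (hbc a).1, by linarith⟩
  exact (hbc a).2.trans (ha.trans (EReal.coe_le_coe_iff.2 (by linarith)))

lemma IsBC.qPos_Pq (hbc : IsBC br f) (hsymm : ∀ b c : B, br b c = br c b) (hssdb : IsSSDB br)
    (hf : ConvexFn f) (hfin : ∃ b, f b ≠ ⊤) : QPos br (Pq br f) := by
  obtain ⟨a, ha, -⟩ := hbc.exists_mem_Pq hsymm hssdb hf hfin 0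
  refine ⟨⟨a, ha⟩, fun b hb c hc => ?_⟩
  have h := (apply_sub_le_intrinsicConj c b).trans
    (intrinsicConj_le_of_mem_Pq hsymm hf (fun b => (hbc b).1) hb)
  rw [show f c = _ from hc, ← EReal.coe_sub, EReal.coe_le_coe_iff] at h
  rw [qForm_sub br hsymm, hsymm b c]
  linarith

end BCFunction

section Fitzpatrick

variable {br : B →ₗ[ℝ] B →ₗ[ℝ] ℝ} {A : Set B}

/-- Simons' `Φ_A`. -/
def fitzpatrick (br : B →ₗ[ℝ] B →ₗ[ℝ] ℝ) (A : Set B) (b : B) : EReal :=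
  ⨆ a : A, ((br b a - qForm br a : ℝ) : EReal)

lemma le_fitzpatrick {a : B} (ha : a ∈ A) (b : B) :
    ((br b a - qForm br a : ℝ) : EReal) ≤ fitzpatrick br A b :=
  le_iSup (fun a : A => ((br b a - qForm br a : ℝ) : EReal)) ⟨a, ha⟩

lemma convexFn_fitzpatrick : ConvexFn (fitzpatrick br A) := by
  intro b c t ht0 ht1
  refine iSup_le fun ⟨a, ha⟩ => ?_
  have hlin : br (t • b + (1 - t) • c) a - qForm br a
      = t * (br b a - qForm br a) + (1 - t) * (br c a - qForm br a) := by
    simp only [map_add, map_smul, LinearMap.add_apply, LinearMap.smul_apply, smul_eq_mul]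
    ring
  rw [hlin, EReal.coe_add, EReal.coe_mul, EReal.coe_mul]
  gcongr
  exacts [le_fitzpatrick ha b, le_fitzpatrick ha c]

lemma fitzpatrick_eq_of_mem (hsymm : ∀ b c : B, br b c = br c b) (hA : QPos br A) {a : B}
    (ha : a ∈ A) : fitzpatrick br A a = qForm br a := by
  refine le_antisymm (iSup_le fun ⟨a', ha'⟩ => EReal.coe_le_coe_iff.2 ?_) ?_
  · linarith [hA.2 a ha a' ha', qForm_sub br hsymm a a']
  · simpa [apply_self_eq_two_mul_qForm, two_mul] using le_fitzpatrick ha a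

lemma qForm_le_fitzpatrick (hsymm : ∀ b c : B, br b c = br c b) (hmax : MaxQPos br A) (b : B) :
    ((qForm br b : ℝ) : EReal) ≤ fitzpatrick br A b := by
  by_contra! hlt
  have hbA : b ∈ A := mem_of_maxQPos hmax fun a ha => by
    have := EReal.coe_lt_coe_iff.1 ((le_fitzpatrick ha b).trans_lt hlt)
    linarith [qForm_sub br hsymm b a]
  simpa [apply_self_eq_two_mul_qForm, two_mul] using (le_fitzpatrick hbA b).trans_lt hlt

/-- Applied to `Φ_A`, the tilted Fenchel duality yields a point `a` with
`⌊a',a⌋ - q(a') ≤ q(a) - s` on `A`, where `s = q(a - w) + ½‖a - w‖² ≥ 0`; maximality puts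
`a` in `A`, and then `a' = a` forces `s = 0`. -/
lemma MaxQPos.exists_mem (hmax : MaxQPos br A) (hsymm : ∀ b c : B, br b c = br c b)
    (hssdb : IsSSDB br) (w : B) : ∃ a ∈ A, qForm br (a - w) = -(1 / 2 * ‖a - w‖ ^ 2) := by
  obtain ⟨a₀, ha₀⟩ := hmax.1.1
  obtain ⟨a, ha⟩ := exists_intrinsicConj_le hsymm hssdb convexFn_fitzpatrick
    ⟨a₀, by simp [fitzpatrick_eq_of_mem hsymm hmax.1 ha₀]⟩ (qForm_le_fitzpatrick hsymm hmax) w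
  have hsupp : ∀ a' ∈ A,
      br a' a - qForm br a' ≤ qForm br a - (qForm br (a - w) + 1 / 2 * ‖a - w‖ ^ 2) := by
    intro a' ha'
    have := (apply_sub_le_intrinsicConj a' a).trans ha
    rwa [fitzpatrick_eq_of_mem hsymm hmax.1 ha', ← EReal.coe_sub, EReal.coe_le_coe_iff] at this
  have hs := hssdb.neg_half_sq_norm_le_qForm (a - w)
  have haA : a ∈ A := mem_of_maxQPos hmax fun a' ha' => by
    linarith [hsupp a' ha', qForm_sub br hsymm a a', hsymm a a']
  refine ⟨a, haA, ?_⟩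
  linarith [hsupp a haA, apply_self_eq_two_mul_qForm br a]

end Fitzpatrick

theorem stmt9_general
    (br : B →ₗ[ℝ] B →ₗ[ℝ] ℝ) (hsymm : ∀ b c : B, br b c = br c b)
    (hssdb : IsSSDB br)
    (g₀ : B → EReal) (hg₀ : ∀ b : B, g₀ b = (((1 / 2) * ‖b‖ ^ 2 : ℝ) : EReal)) :
    (∀ f : B → EReal, ProperFn f → ConvexFn f → IsBC br f →
      MaxQPos br (Pq br f) ∧ Pq br (intrinsicConj br f) = Pq br f) ∧
    (∀ A : Set B, QPos br A →
      (MaxQPos br A ↔ A - Nq br g₀ = (Set.univ : Set B))) := by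
  refine ⟨fun f hproper hf hbc => ⟨?_, Pq_intrinsicConj hsymm hf hbc⟩, fun A hA => ?_⟩
  · exact maxQPos_of_forall_exists (hbc.qPos_Pq hsymm hssdb hf hproper.2)
      (hbc.exists_mem_Pq hsymm hssdb hf hproper.2)
  · rw [sub_Nq_eq_univ_iff hg₀]
    exact ⟨fun hmax => hmax.exists_mem hsymm hssdb, maxQPos_of_forall_exists hA⟩

/-- in an SSDB space, with `g₀ := ½‖·‖²`:
(a) if `f ∈ PC(B)` is a BC-function then `P_q(f)` is maximally q-positive and
`P_q(f^@) = P_q(f)`;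
(b) a q-positive subset `A` of `B` is maximally q-positive iff `A - N_q(g₀) = B`. -/
theorem stmt9 [CompleteSpace B] [Nontrivial B]
    (br : B →ₗ[ℝ] B →ₗ[ℝ] ℝ) (hsymm : ∀ b c : B, br b c = br c b)
    (hssdb : IsSSDB br)
    (g₀ : B → EReal) (hg₀ : ∀ b : B, g₀ b = (((1 / 2) * ‖b‖ ^ 2 : ℝ) : EReal)) :
    (∀ f : B → EReal, ProperFn f → ConvexFn f → IsBC br f →
      MaxQPos br (Pq br f) ∧ Pq br (intrinsicConj br f) = Pq br f) ∧
    (∀ A : Set B, QPos br A →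
      (MaxQPos br A ↔ A - Nq br g₀ = (Set.univ : Set B))) :=
  stmt9_general br hsymm hssdb g₀ hg₀
end
end

section
/- Let E be a nonzero reflexive Banach space and S : E ⇉ E* be maximally monotone. Then (S + J)(E) = E*, i.e. for every y* ∈ E* there exists x ∈ E with y* ∈ Sx + Jx, where J is the duality map. -/
open scoped Pointwise

noncomputable section

variable {E : Type*} [NormedAddCommGroup E] [NormedSpace ℝ E]

/-- `E` is reflexive: the canonical map into the double dual is surjective. -/
def ReflexiveSp (E : Type*) [NormedAddCommGroup E] [NormedSpace ℝ E] : Prop :=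
  Function.Surjective (NormedSpace.inclusionInDoubleDual ℝ E)

/-- The SSD pairing `⌊(x,x*),(y,y*)⌋ = ⟨x,y*⟩ + ⟨y,x*⟩` on `E × E*`. -/
def pairP (p r : E × StrongDual ℝ E) : ℝ := r.2 p.1 + p.2 r.1

/-- `q(x,x*) = ⟨x,x*⟩`. -/
def qP (p : E × StrongDual ℝ E) : ℝ := p.2 p.1

/-- The intrinsic conjugate `f^@(c) = sup_b (⌊b,c⌋ - f(b))` on `E × E*`. -/
def conjP (f : E × StrongDual ℝ E → EReal) (c : E × StrongDual ℝ E) : EReal :=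
  ⨆ b : E × StrongDual ℝ E, ((pairP b c : ℝ) : EReal) - f b

/-- A proper function into `(-∞,∞]`: never `⊥` and somewhere finite. -/
def ProperFnP (f : E × StrongDual ℝ E → EReal) : Prop :=
  (∀ p, f p ≠ ⊥) ∧ ∃ p, f p ≠ ⊤

/-- Convexity for `(-∞,∞]`-valued functions on `E × E*`. -/
def ConvexFnP (f : E × StrongDual ℝ E → EReal) : Prop :=
  ∀ p r : E × StrongDual ℝ E, ∀ t : ℝ, 0 ≤ t → t ≤ 1 →
    f (t • p + (1 - t) • r) ≤ (t : EReal) * f p + ((1 - t : ℝ) : EReal) * f r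

/-- `P_q(f) = {b : f(b) = q(b)}`. -/
def PqP (f : E × StrongDual ℝ E → EReal) : Set (E × StrongDual ℝ E) :=
  {p | f p = ((qP p : ℝ) : EReal)}

/-- `f` is a BC-function: `f^@(b) ≥ f(b) ≥ q(b)` for all `b`. -/
def IsBCP (f : E × StrongDual ℝ E → EReal) : Prop :=
  ∀ p : E × StrongDual ℝ E, ((qP p : ℝ) : EReal) ≤ f p ∧ f p ≤ conjP f p

/-- The effective domain of an `EReal`-valued function on `E × E*`. -/
def domP (f : E × StrongDual ℝ E → EReal) : Set (E × StrongDual ℝ E) :=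
  {p | ∃ r : ℝ, f p = (r : EReal)}

/-- A monotone subset of `E × E*`. -/
def MonoSet (A : Set (E × StrongDual ℝ E)) : Prop :=
  ∀ p ∈ A, ∀ r ∈ A, 0 ≤ (p.2 - r.2) (p.1 - r.1)

/-- A maximally monotone subset of `E × E*`. -/
def MaxMono (A : Set (E × StrongDual ℝ E)) : Prop :=
  A.Nonempty ∧ MonoSet A ∧ ∀ C : Set (E × StrongDual ℝ E), MonoSet C → A ⊆ C → C = A

/-- `G(-J) = {(x,x*) : ½‖x‖² + ½‖x*‖² = -⟨x,x*⟩}` where `J` is the duality map. -/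
def GnegJ (E : Type*) [NormedAddCommGroup E] [NormedSpace ℝ E] :
    Set (E × StrongDual ℝ E) :=
  {p | (1 / 2) * ‖p.1‖ ^ 2 + (1 / 2) * ‖p.2‖ ^ 2 = -(p.2 p.1)}

/-- The graph of a multifunction `S : E ⇉ E*`. -/
def graphOf (S : E → Set (StrongDual ℝ E)) : Set (E × StrongDual ℝ E) :=
  {p | p.2 ∈ S p.1}

/-- `S : E ⇉ E*` is maximally monotone. -/
def MaxMonoOp (S : E → Set (StrongDual ℝ E)) : Prop := MaxMono (graphOf S)

/-- The Fitzpatrick function of a multifunction `S : E ⇉ E*`: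
`φ_S(x,x*) = sup_{(s,s*) ∈ G(S)} (⟨x,s*⟩ + ⟨s,x*⟩ - ⟨s,s*⟩)`. -/
def fitz (S : E → Set (StrongDual ℝ E)) (p : E × StrongDual ℝ E) : EReal :=
  ⨆ s : graphOf S,
    (((s : E × StrongDual ℝ E).2 p.1 + p.2 (s : E × StrongDual ℝ E).1
      - (s : E × StrongDual ℝ E).2 (s : E × StrongDual ℝ E).1 : ℝ) : EReal)

/-- The domain `D(S) = {x : Sx ≠ ∅}` of a multifunction. -/
def domOp (S : E → Set (StrongDual ℝ E)) : Set E := {x | (S x).Nonempty}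

/-!
Translating the graph of `S` by `(0, y*)`, it suffices to show that every maximally monotone
`A ⊆ E × E*` meets `G(-J) = {b | h b = -q b}`, where `h (x, x*) = ½‖x‖² + ½‖x*‖²` and
`q (x, x*) = ⟨x, x*⟩`. Following Simons, put `p b = inf_c (φ_A c + h (c + b))`, with `φ_A` the
Fitzpatrick function of `A`. It is a finite convex function, and maximality of `A` gives
`0 ≤ p 0`, so Hahn–Banach yields a linear minorant of `p`. That minorant is bounded above near
`0`, hence continuous, hence by reflexivity of the form `c ↦ ⌊c, d⌋`. Testing it at a point `c`
with `h c + h d ≤ ⌊c, d⌋` (norm attainment, again by reflexivity) gives `h d ≤ ⌊a, d⌋ + q a`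
for all `a ∈ A`. So `-d` is monotonically related to `A`, lies in `A` by maximality, and the same
inequality at `a = -d` reads `h (-d) ≤ -q (-d)`.
-/

open Set

section SublinearMinorant

variable {V : Type*} [AddCommGroup V] [Module ℝ V] {p : V → ℝ}

lemma ConvexOn.perspective_add_le (hp : ConvexOn ℝ univ p) {t s : ℝ} (ht : 0 < t) (hs : 0 < s)
    (x y : V) :
    p ((t * s / (t + s)) • (x + y)) / (t * s / (t + s)) ≤ p (t • x) / t + p (s • y) / s := by
  have hts : 0 < t + s := add_pos ht hs
  have hcomb : (s / (t + s)) • (t • x) + (t / (t + s)) • (s • y) = (t * s / (t + s)) • (x + y) := by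
    rw [smul_smul, smul_smul, smul_add]
    congr 2 <;> ring
  have hconv := hp.2 (mem_univ (t • x)) (mem_univ (s • y)) (by positivity : 0 ≤ s / (t + s))
    (by positivity : 0 ≤ t / (t + s)) (by field_simp; ring)
  rw [hcomb, smul_eq_mul, smul_eq_mul] at hconv
  rw [div_le_iff₀ (by positivity)]
  calc p ((t * s / (t + s)) • (x + y))
      ≤ s / (t + s) * p (t • x) + t / (t + s) * p (s • y) := hconv
    _ = (p (t • x) / t + p (s • y) / s) * (t * s / (t + s)) := by field_simp

/-- The greatest sublinear function below `p` when `p` is convex with `0 ≤ p 0`. -/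
def sublinearMinorant (p : V → ℝ) (x : V) : ℝ := ⨅ t : Ioi (0 : ℝ), p ((t : ℝ) • x) / t

lemma ConvexOn.bddBelow_perspective (hp : ConvexOn ℝ univ p) (hp₀ : 0 ≤ p 0) (x : V) :
    BddBelow (range fun t : Ioi (0 : ℝ) => p ((t : ℝ) • x) / t) := by
  refine ⟨-p (-x), ?_⟩
  rintro _ ⟨⟨t, ht⟩, rfl⟩
  have h := hp.perspective_add_le ht one_pos x (-x)
  rw [add_neg_cancel, smul_zero, one_smul, div_one] at h
  have : 0 ≤ p 0 / (t * 1 / (t + 1)) := div_nonneg hp₀ (by have := ht.out; positivity)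
  dsimp only
  linarith

lemma ConvexOn.sublinearMinorant_le (hp : ConvexOn ℝ univ p) (hp₀ : 0 ≤ p 0) (x : V) :
    sublinearMinorant p x ≤ p x := by
  simpa [sublinearMinorant] using ciInf_le (hp.bddBelow_perspective hp₀ x) ⟨1, mem_Ioi.2 one_pos⟩

lemma sublinearMinorant_smul {c : ℝ} (hc : 0 < c) (x : V) :
    sublinearMinorant p (c • x) = c * sublinearMinorant p x := by
  have hsurj : Function.Surjective fun t : Ioi (0 : ℝ) => (⟨t * c, mul_pos t.2 hc⟩ : Ioi (0 : ℝ)) :=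
    fun t => ⟨⟨t / c, div_pos t.2 hc⟩, Subtype.ext (div_mul_cancel₀ _ hc.ne')⟩
  rw [sublinearMinorant, sublinearMinorant, Real.mul_iInf_of_nonneg hc.le,
    ← hsurj.iInf_comp fun t : Ioi (0 : ℝ) => c * (p ((t : ℝ) • x) / t)]
  congr 1
  ext t
  dsimp only
  rw [mul_smul]
  field_simp

lemma ConvexOn.sublinearMinorant_add_le (hp : ConvexOn ℝ univ p) (hp₀ : 0 ≤ p 0) (x y : V) :
    sublinearMinorant p (x + y) ≤ sublinearMinorant p x + sublinearMinorant p y := by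
  have key : ∀ t s : Ioi (0 : ℝ),
      sublinearMinorant p (x + y) ≤ p ((t : ℝ) • x) / t + p ((s : ℝ) • y) / s := fun t s =>
    (ciInf_le (hp.bddBelow_perspective hp₀ (x + y))
      ⟨t * s / (t + s), mem_Ioi.2 (by have := t.2.out; have := s.2.out; positivity)⟩).trans
      (hp.perspective_add_le t.2 s.2 x y)
  have hx : ∀ s : Ioi (0 : ℝ),
      sublinearMinorant p (x + y) - p ((s : ℝ) • y) / s ≤ sublinearMinorant p x := fun s =>
    le_ciInf fun t => by linarith [key t s]
  have hy : sublinearMinorant p (x + y) - sublinearMinorant p x ≤ sublinearMinorant p y :=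
    le_ciInf fun s => by linarith [hx s]
  linarith

theorem ConvexOn.exists_linearMap_le (hp : ConvexOn ℝ univ p) (hp₀ : 0 ≤ p 0) :
    ∃ g : V →ₗ[ℝ] ℝ, ∀ x, g x ≤ p x := by
  obtain ⟨g, -, hg⟩ := exists_extension_of_le_sublinear ((0 : V →ₗ[ℝ] ℝ).toPMap ⊥)
    (sublinearMinorant p) (fun c hc x => sublinearMinorant_smul hc x)
    (hp.sublinearMinorant_add_le hp₀) fun x => by
      rw [(Submodule.mem_bot ℝ).mp x.2]
      exact le_ciInf fun t => div_nonneg (by simpa using hp₀) t.2.out.le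
  exact ⟨g, fun x => (hg x).trans (hp.sublinearMinorant_le hp₀ x)⟩

end SublinearMinorant

lemma LinearMap.norm_apply_le_of_forall_closedBall_le {V : Type*} [NormedAddCommGroup V]
    [NormedSpace ℝ V] (f : V →ₗ[ℝ] ℝ) {C : ℝ} (hf : ∀ z ∈ Metric.closedBall (0 : V) 1, f z ≤ C)
    (z : V) : ‖f z‖ ≤ C * ‖z‖ := by
  refine div_one C ▸ f.bound_of_ball_bound' one_pos C (fun w hw => ?_) z
  have hw' : -w ∈ Metric.closedBall (0 : V) 1 := by simpa using hw
  rw [Real.norm_eq_abs, abs_le]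
  constructor <;> linarith [hf w hw, hf (-w) hw', f.map_neg w]

lemma exists_dual_norm_le_apply_eq_sq (x : E) :
    ∃ f : StrongDual ℝ E, ‖f‖ ≤ ‖x‖ ∧ f x = ‖x‖ ^ 2 := by
  obtain ⟨g, hg, hgx⟩ := exists_dual_vector'' ℝ x
  refine ⟨‖x‖ • g, ?_, ?_⟩
  · rw [norm_smul, norm_norm]
    exact mul_le_of_le_one_right (norm_nonneg x) hg
  · rw [smul_apply, hgx, smul_eq_mul, RCLike.ofReal_real_eq_id, id, sq]

lemma ReflexiveSp.exists_norm_le_apply_eq_sq (hrefl : ReflexiveSp E) (f : StrongDual ℝ E) :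
    ∃ x : E, ‖x‖ ≤ ‖f‖ ∧ f x = ‖f‖ ^ 2 := by
  obtain ⟨Φ, hΦ, hΦf⟩ := exists_dual_norm_le_apply_eq_sq f
  obtain ⟨x, rfl⟩ := hrefl Φ
  exact ⟨x, (NormedSpace.inclusionInDoubleDualLi ℝ).norm_map x ▸ hΦ, hΦf⟩

lemma ReflexiveSp.exists_pairP_eq (hrefl : ReflexiveSp E)
    (G : StrongDual ℝ (E × StrongDual ℝ E)) : ∃ d, ∀ c, G c = pairP c d := by
  obtain ⟨y, hy⟩ := hrefl (G.comp (ContinuousLinearMap.inr ℝ E (StrongDual ℝ E)))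
  refine ⟨(y, G.comp (ContinuousLinearMap.inl ℝ E (StrongDual ℝ E))), fun c => ?_⟩
  have hyc : c.2 y = G (0, c.2) := by rw [← NormedSpace.dual_def, hy]; rfl
  rw [pairP, hyc, ← Prod.fst_add_snd c]
  simp [← map_add]

lemma pairP_add_right (a b c : E × StrongDual ℝ E) : pairP a (b + c) = pairP a b + pairP a c := by
  simp only [pairP, Prod.fst_add, Prod.snd_add, add_apply, map_add]
  ring

lemma pairP_self (a : E × StrongDual ℝ E) : pairP a a = 2 * qP a := by
  rw [pairP, qP]; ring

lemma qP_neg (a : E × StrongDual ℝ E) : qP (-a) = qP a := by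
  simp [qP]

lemma qP_sub (a b : E × StrongDual ℝ E) : qP (a - b) = qP a + qP b - pairP a b := by
  simp only [qP, pairP, Prod.fst_sub, Prod.snd_sub, sub_apply, map_sub]
  ring

lemma qP_add (a b : E × StrongDual ℝ E) : qP (a + b) = qP a + qP b + pairP a b := by
  simp only [qP, pairP, Prod.fst_add, Prod.snd_add, add_apply, map_add]
  ring

lemma pairP_sub_left (a b c : E × StrongDual ℝ E) : pairP (a - b) c = pairP a c - pairP b c := by
  simp only [pairP, Prod.fst_sub, Prod.snd_sub, sub_apply, map_sub]
  ring

lemma pairP_neg_left (a b : E × StrongDual ℝ E) : pairP (-a) b = -pairP a b := by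
  simp only [pairP, Prod.fst_neg, Prod.snd_neg, neg_apply, map_neg]
  ring

def halfSqNorm (b : E × StrongDual ℝ E) : ℝ := (1 / 2) * ‖b.1‖ ^ 2 + (1 / 2) * ‖b.2‖ ^ 2

lemma halfSqNorm_neg (b : E × StrongDual ℝ E) : halfSqNorm (-b) = halfSqNorm b := by
  simp [halfSqNorm]

lemma halfSqNorm_le_sq_norm (b : E × StrongDual ℝ E) : halfSqNorm b ≤ ‖b‖ ^ 2 := by
  have h1 := pow_le_pow_left₀ (norm_nonneg _) (norm_fst_le b) 2
  have h2 := pow_le_pow_left₀ (norm_nonneg _) (norm_snd_le b) 2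
  rw [halfSqNorm]
  linarith

lemma convexOn_halfSqNorm : ConvexOn ℝ univ (halfSqNorm (E := E)) := by
  have hfst : ConvexOn ℝ univ fun b : E × StrongDual ℝ E => ‖b.1‖ :=
    (convexOn_norm convex_univ).comp_linearMap (LinearMap.fst ℝ E (StrongDual ℝ E))
  have hsnd : ConvexOn ℝ univ fun b : E × StrongDual ℝ E => ‖b.2‖ :=
    (convexOn_norm convex_univ).comp_linearMap (LinearMap.snd ℝ E (StrongDual ℝ E))
  exact ((hfst.pow (fun _ _ => norm_nonneg _) 2).smul (by norm_num)).add
    ((hsnd.pow (fun _ _ => norm_nonneg _) 2).smul (by norm_num))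

lemma neg_halfSqNorm_add_le_pairP (a b : E × StrongDual ℝ E) :
    -(halfSqNorm a + halfSqNorm b) ≤ pairP a b := by
  have h1 := neg_abs_le (b.2 a.1)
  have h2 := neg_abs_le (a.2 b.1)
  have h3 : |b.2 a.1| ≤ ‖b.2‖ * ‖a.1‖ := by simpa using b.2.le_opNorm a.1
  have h4 : |a.2 b.1| ≤ ‖a.2‖ * ‖b.1‖ := by simpa using a.2.le_opNorm b.1
  rw [halfSqNorm, halfSqNorm, pairP]
  nlinarith [sq_nonneg (‖b.2‖ - ‖a.1‖), sq_nonneg (‖a.2‖ - ‖b.1‖)]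

lemma neg_halfSqNorm_le_qP (b : E × StrongDual ℝ E) : -halfSqNorm b ≤ qP b := by
  linarith [neg_halfSqNorm_add_le_pairP b b, pairP_self b]

lemma ReflexiveSp.exists_halfSqNorm_add_le_pairP (hrefl : ReflexiveSp E)
    (d : E × StrongDual ℝ E) : ∃ c, halfSqNorm c + halfSqNorm d ≤ pairP c d := by
  obtain ⟨x, hx, hxd⟩ := hrefl.exists_norm_le_apply_eq_sq d.2
  obtain ⟨f, hf, hfd⟩ := exists_dual_norm_le_apply_eq_sq d.1
  refine ⟨(x, f), ?_⟩
  have h1 := pow_le_pow_left₀ (norm_nonneg _) hx 2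
  have h2 := pow_le_pow_left₀ (norm_nonneg _) hf 2
  rw [halfSqNorm, halfSqNorm, pairP]
  dsimp only
  linarith

/-- The upper bounds of `c ↦ φ_A(c) + h(c + b)`, where `φ_A(c) = sup_{a ∈ A} (⌊a, c⌋ - q(a))` is
the Fitzpatrick function of `A`; phrasing it through upper bounds avoids the value `+∞`. -/
def fitzInfConvBounds (A : Set (E × StrongDual ℝ E)) (b : E × StrongDual ℝ E) : Set ℝ :=
  {r | ∃ c, ∀ a ∈ A, pairP a c - qP a + halfSqNorm (c + b) ≤ r}

def fitzInfConv (A : Set (E × StrongDual ℝ E)) (b : E × StrongDual ℝ E) : ℝ :=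
  sInf (fitzInfConvBounds A b)

section FitzInfConv

variable {A : Set (E × StrongDual ℝ E)} {a a' : E × StrongDual ℝ E}

lemma MonoSet.pairP_sub_qP_le (hA : MonoSet A) (ha : a ∈ A) (ha' : a' ∈ A) :
    pairP a' a - qP a' ≤ qP a := by
  have h : 0 ≤ qP (a' - a) := hA a' ha' a ha
  rw [qP_sub] at h
  linarith

lemma bddBelow_fitzInfConvBounds (ha : a ∈ A) (b : E × StrongDual ℝ E) :
    BddBelow (fitzInfConvBounds A b) := by
  refine ⟨-(halfSqNorm a + pairP a b + qP a), ?_⟩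
  rintro r ⟨c, hc⟩
  have h := neg_halfSqNorm_add_le_pairP a (c + b)
  rw [pairP_add_right] at h
  linarith [hc a ha]

lemma MonoSet.qP_add_halfSqNorm_mem_fitzInfConvBounds (hA : MonoSet A) (ha : a ∈ A)
    (b : E × StrongDual ℝ E) : qP a + halfSqNorm (a + b) ∈ fitzInfConvBounds A b :=
  ⟨a, fun a' ha' => by linarith [hA.pairP_sub_qP_le ha ha']⟩

lemma MonoSet.fitzInfConv_le (hA : MonoSet A) (ha : a ∈ A) (b : E × StrongDual ℝ E) :
    fitzInfConv A b ≤ qP a + halfSqNorm (a + b) :=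
  csInf_le (bddBelow_fitzInfConvBounds ha b) (hA.qP_add_halfSqNorm_mem_fitzInfConvBounds ha b)

lemma smul_add_smul_fitzInfConvBounds_subset {s t : ℝ} (hs : 0 ≤ s) (ht : 0 ≤ t) (hst : s + t = 1)
    (b b' : E × StrongDual ℝ E) :
    s • fitzInfConvBounds A b + t • fitzInfConvBounds A b' ⊆
      fitzInfConvBounds A (s • b + t • b') := by
  rintro _ ⟨_, ⟨r, ⟨c, hc⟩, rfl⟩, _, ⟨r', ⟨c', hc'⟩, rfl⟩, rfl⟩
  refine ⟨s • c + t • c', fun a ha => ?_⟩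
  have hconv := convexOn_halfSqNorm.2 (mem_univ (c + b)) (mem_univ (c' + b')) hs ht hst
  rw [show s • (c + b) + t • (c' + b') = s • c + t • c' + (s • b + t • b') by module,
    smul_eq_mul, smul_eq_mul] at hconv
  have hpair : pairP a (s • c + t • c') = s * pairP a c + t * pairP a c' := by
    simp only [pairP, Prod.fst_add, Prod.snd_add, Prod.smul_fst, Prod.smul_snd, map_add, map_smul,
      add_apply, smul_apply, smul_eq_mul]
    ring
  have hq : qP a = s * qP a + t * qP a := by rw [← add_mul, hst, one_mul]
  change _ ≤ s * r + t * r'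
  rw [hpair]
  linarith [mul_le_mul_of_nonneg_left (hc a ha) hs, mul_le_mul_of_nonneg_left (hc' a ha) ht]

lemma MonoSet.convexOn_fitzInfConv (hA : MonoSet A) (hne : A.Nonempty) :
    ConvexOn ℝ univ (fitzInfConv A) := by
  obtain ⟨a₀, ha₀⟩ := hne
  have hbdd := bddBelow_fitzInfConvBounds ha₀
  have hne b : (fitzInfConvBounds A b).Nonempty :=
    ⟨_, hA.qP_add_halfSqNorm_mem_fitzInfConvBounds ha₀ b⟩
  refine ⟨convex_univ, fun b _ b' _ s t hs ht hst => ?_⟩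
  calc fitzInfConv A (s • b + t • b')
      ≤ sInf (s • fitzInfConvBounds A b + t • fitzInfConvBounds A b') :=
        csInf_le_csInf (hbdd _) ((hne b).smul_set.add (hne b').smul_set)
          (smul_add_smul_fitzInfConvBounds_subset hs ht hst b b')
    _ = s • fitzInfConv A b + t • fitzInfConv A b' := by
        rw [csInf_add (hne b).smul_set ((hbdd b).smul_of_nonneg hs) (hne b').smul_set
          ((hbdd b').smul_of_nonneg ht), Real.sInf_smul_of_nonneg hs,
          Real.sInf_smul_of_nonneg ht]
        rfl

end FitzInfConv

section MaxMono

variable {A : Set (E × StrongDual ℝ E)}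

lemma MonoSet.preimage_add_right (hA : MonoSet A) (t : E × StrongDual ℝ E) :
    MonoSet ((· + t) ⁻¹' A) := fun p hp r hr => by
  have h : 0 ≤ qP (p + t - (r + t)) := hA _ hp _ hr
  rwa [add_sub_add_right_eq_sub] at h

lemma MaxMono.preimage_add_right (hA : MaxMono A) (t : E × StrongDual ℝ E) :
    MaxMono ((· + t) ⁻¹' A) := by
  obtain ⟨⟨a, ha⟩, hmono, hmax⟩ := hA
  refine ⟨⟨a - t, by simpa using ha⟩, hmono.preimage_add_right t, fun C hC hAC => ?_⟩
  have hCA : (· + -t) ⁻¹' C = A :=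
    hmax _ (hC.preimage_add_right (-t)) fun a ha => hAC (by simpa using ha)
  rw [← hCA]
  ext c
  simp

lemma MaxMono.mem_of_forall_qP_sub_nonneg (hA : MaxMono A) {b : E × StrongDual ℝ E}
    (hb : ∀ a ∈ A, 0 ≤ qP (a - b)) : b ∈ A := by
  have hmono : MonoSet (insert b A) := by
    rintro p (rfl | hp) r (rfl | hr)
    · simp
    · have h : 0 ≤ qP (-(r - p)) := by rw [qP_neg]; exact hb r hr
      rwa [neg_sub] at h
    · exact hb p hp
    · exact hA.2.1 p hp r hr
  rw [← hA.2.2 _ hmono (subset_insert b A)]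
  exact mem_insert b A

lemma MaxMono.fitzInfConv_zero_nonneg (hA : MaxMono A) : 0 ≤ fitzInfConv A 0 := by
  obtain ⟨a₀, ha₀⟩ := hA.1
  refine le_csInf ⟨_, hA.2.1.qP_add_halfSqNorm_mem_fitzInfConvBounds ha₀ 0⟩ ?_
  rintro r ⟨c, hc⟩
  simp only [add_zero] at hc
  by_contra! hr
  -- `c` would be monotonically related to all of `A`, hence in `A`, which is absurd at `a = c`
  have hcA : c ∈ A := hA.mem_of_forall_qP_sub_nonneg fun a ha => by
    rw [qP_sub]
    linarith [hc a ha, neg_halfSqNorm_le_qP c]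
  linarith [hc c hcA, pairP_self c, neg_halfSqNorm_le_qP c]

lemma MaxMono.exists_pairP_le_fitzInfConv (hrefl : ReflexiveSp E) (hA : MaxMono A) :
    ∃ d, ∀ c, pairP c d ≤ fitzInfConv A c := by
  obtain ⟨a₀, ha₀⟩ := hA.1
  obtain ⟨g, hg⟩ :=
    (hA.2.1.convexOn_fitzInfConv hA.1).exists_linearMap_le hA.fitzInfConv_zero_nonneg
  have hg_le : ∀ z ∈ Metric.closedBall (0 : E × StrongDual ℝ E) 1,
      g z ≤ qP a₀ + (‖a₀‖ + 1) ^ 2 := by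
    intro z hz
    have hz' : ‖a₀ + z‖ ≤ ‖a₀‖ + 1 := (norm_add_le _ _).trans (by simpa using hz)
    linarith [hg z, hA.2.1.fitzInfConv_le ha₀ z, halfSqNorm_le_sq_norm (a₀ + z),
      pow_le_pow_left₀ (norm_nonneg _) hz' 2]
  obtain ⟨d, hd⟩ := hrefl.exists_pairP_eq
    (g.mkContinuous _ (g.norm_apply_le_of_forall_closedBall_le hg_le))
  exact ⟨d, fun c => hd c ▸ hg c⟩

theorem MaxMono.nonempty_inter_gnegJ (hrefl : ReflexiveSp E) (hA : MaxMono A) :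
    (A ∩ GnegJ E).Nonempty := by
  obtain ⟨d, hd⟩ := hA.exists_pairP_le_fitzInfConv hrefl
  obtain ⟨c, hc⟩ := hrefl.exists_halfSqNorm_add_le_pairP d
  have hdA : ∀ a ∈ A, halfSqNorm d ≤ pairP a d + qP a := fun a ha => by
    have h := hA.2.1.fitzInfConv_le ha (c - a)
    rw [add_sub_cancel] at h
    linarith [hd (c - a), pairP_sub_left c a d]
  have hmem : -d ∈ A := hA.mem_of_forall_qP_sub_nonneg fun a ha => by
    rw [sub_neg_eq_add, qP_add]
    linarith [hdA a ha, neg_halfSqNorm_le_qP d]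
  refine ⟨-d, hmem, ?_⟩
  change halfSqNorm (-d) = -qP (-d)
  rw [halfSqNorm_neg, qP_neg]
  linarith [hdA (-d) hmem, pairP_neg_left d d, pairP_self d, qP_neg d, neg_halfSqNorm_le_qP d]

end MaxMono

theorem stmt16_general (hrefl : ReflexiveSp E)
    (S : E → Set (StrongDual ℝ E)) (hS : MaxMonoOp S) :
    ∀ ystar : StrongDual ℝ E, ∃ x : E, ∃ s ∈ S x, ∃ j : StrongDual ℝ E,
      (1 / 2) * ‖x‖ ^ 2 + (1 / 2) * ‖j‖ ^ 2 = j x ∧ ystar = s + j := by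
  intro ystar
  obtain ⟨b, hbS, hbJ⟩ := (MaxMono.preimage_add_right hS (0, ystar)).nonempty_inter_gnegJ hrefl
  refine ⟨b.1, b.2 + ystar, by simpa [graphOf] using hbS, -b.2, ?_, by abel⟩
  simpa [GnegJ] using hbJ

/-- Rockafellar's surjectivity theorem.  If `E` is a nonzero reflexive
Banach space and `S : E ⇉ E*` is maximally monotone, then `(S + J)(E) = E*`. -/
theorem stmt16 [CompleteSpace E] [Nontrivial E] (hrefl : ReflexiveSp E)
    (S : E → Set (StrongDual ℝ E)) (hS : MaxMonoOp S) :
    ∀ ystar : StrongDual ℝ E, ∃ x : E, ∃ s ∈ S x, ∃ j : StrongDual ℝ E,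
      (1 / 2) * ‖x‖ ^ 2 + (1 / 2) * ‖j‖ ^ 2 = j x ∧ ystar = s + j :=
  stmt16_general hrefl S hS
end
end
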